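/- arXiv:1506.02890 — 6 statements merged into one kernel-verified Lean document; each statement's English description precedes it below -/
import Mathlib

section
/- Suppose (x*, y*) is a Nash equilibrium of the constrained bimatrix game, i.e., x* maximizes xᵀA y* over X̂ and y* maximizes x*ᵀB y over Ŷ. Then there exist scalars u ≥ 0 and α ∈ ℝ such that: A y* - u·r - α·1 ≤ 0 (componentwise), x*ᵀA y* - u·r_ave - α = 0, and u·(rᵀx* - r_ave) = 0. -/
/-! With `c = A y*` and `v = c ⬝ᵥ x*`, the point `x*` maximizes the linear function `c ⬝ᵥ x` over
the simplex cut by the single constraint `r ⬝ᵥ x ≤ r_ave`. If the constraint is slack at `x*`, then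
`x*` is a local, hence (by linearity) a global maximizer over the whole simplex, and `u = 0` works.
If it is tight, any `u ≥ 0` with `c i ≤ v + u (r i - r_ave)` for all `i` works. The vertices `e i`
with `r i ≤ r_ave` give `c i ≤ v`, and for `r i < r_ave < r k` the mixture of `e i` and `e k` on the
hyperplane `r ⬝ᵥ x = r_ave` shows `(c k - v) / (r k - r_ave) ≤ (v - c i) / (r_ave - r i)`; so `u`
can be taken as the largest of `0` and the slopes on the left. -/

open Finset Matrix

variable {ι : Type*} [Fintype ι] [DecidableEq ι] {c r : ι → ℝ} {b v : ℝ}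

theorem le_of_forall_dotProduct_le (hopt : ∀ x ∈ stdSimplex ℝ ι, r ⬝ᵥ x ≤ b → c ⬝ᵥ x ≤ v)
    {i : ι} (hi : r i ≤ b) : c i ≤ v := by
  simpa using hopt _ (single_mem_stdSimplex ℝ i) (by simpa using hi)

theorem mul_sub_le_mul_sub_of_forall_dotProduct_le
    (hopt : ∀ x ∈ stdSimplex ℝ ι, r ⬝ᵥ x ≤ b → c ⬝ᵥ x ≤ v)
    {i k : ι} (hi : r i < b) (hk : b < r k) :
    (c k - v) * (b - r i) ≤ (v - c i) * (r k - b) := by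
  have hd : 0 < r k - r i := by linarith
  set x : ι → ℝ :=
    ((r k - b) / (r k - r i)) • Pi.single i 1 + ((b - r i) / (r k - r i)) • Pi.single k 1
  have hx : x ∈ stdSimplex ℝ ι :=
    convex_stdSimplex ℝ ι (single_mem_stdSimplex ℝ i) (single_mem_stdSimplex ℝ k)
      (div_nonneg (by linarith) hd.le) (div_nonneg (by linarith) hd.le) (by field_simp; ring)
  have hdot : ∀ w : ι → ℝ, w ⬝ᵥ x = ((r k - b) * w i + (b - r i) * w k) / (r k - r i) := by
    intro w
    simp only [x, dotProduct_add, dotProduct_smul, dotProduct_single, smul_eq_mul, mul_one]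
    field_simp
  have hxr : r ⬝ᵥ x = b := by rw [hdot]; field_simp; ring
  have hval := hopt x hx hxr.le
  rw [hdot, div_le_iff₀ hd] at hval
  linarith

theorem exists_nonneg_le_add_mul_of_forall_dotProduct_le
    (hopt : ∀ x ∈ stdSimplex ℝ ι, r ⬝ᵥ x ≤ b → c ⬝ᵥ x ≤ v) :
    ∃ u, 0 ≤ u ∧ ∀ i, c i ≤ v + u * (r i - b) := by
  set u := (insert 0 ((univ.filter (b < r ·)).image fun k => (c k - v) / (r k - b))).max'
    (insert_nonempty _ _)
  refine ⟨u, le_max' _ _ (mem_insert_self _ _), fun i => ?_⟩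
  rcases lt_trichotomy (r i) b with hi | hi | hi
  · have hu : u ≤ (v - c i) / (b - r i) := by
      refine max'_le _ _ _ fun s hs => ?_
      simp only [mem_insert, mem_image, mem_filter, mem_univ, true_and] at hs
      rcases hs with rfl | ⟨k, hk, rfl⟩
      · exact div_nonneg (by linarith [le_of_forall_dotProduct_le hopt hi.le]) (by linarith)
      · rw [div_le_div_iff₀ (by linarith) (by linarith)]
        exact mul_sub_le_mul_sub_of_forall_dotProduct_le hopt hi hk
    rw [le_div_iff₀ (by linarith)] at hu
    linarith
  · simpa [hi] using le_of_forall_dotProduct_le hopt hi.le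
  · have hu : (c i - v) / (r i - b) ≤ u :=
      le_max' _ _ <| mem_insert_of_mem <|
        mem_image_of_mem (fun k => (c k - v) / (r k - b)) (mem_filter.2 ⟨mem_univ i, hi⟩)
    rw [div_le_iff₀ (by linarith)] at hu
    linarith

theorem le_dotProduct_of_forall_dotProduct_le_of_lt {xs : ι → ℝ} (hxs : xs ∈ stdSimplex ℝ ι)
    (hopt : ∀ x ∈ stdSimplex ℝ ι, r ⬝ᵥ x ≤ b → c ⬝ᵥ x ≤ c ⬝ᵥ xs) (hslack : r ⬝ᵥ xs < b)
    (i : ι) : c i ≤ c ⬝ᵥ xs := by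
  have hloc : IsLocalMaxOn (c ⬝ᵥ ·) (stdSimplex ℝ ι) xs := by
    have hopen : {x : ι → ℝ | r ⬝ᵥ x < b} ∈ nhds xs :=
      (isOpen_lt (continuous_const.dotProduct continuous_id) continuous_const).mem_nhds hslack
    filter_upwards [mem_nhdsWithin_of_mem_nhds hopen, self_mem_nhdsWithin] with x hxr hx
    exact hopt x hx (le_of_lt hxr)
  have hmax := IsMaxOn.of_isLocalMaxOn_of_concaveOn hxs hloc
    ((dotProductBilin ℝ ℝ c).concaveOn (convex_stdSimplex ℝ ι))
  simpa using hmax (single_mem_stdSimplex ℝ i)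

theorem exists_kkt_multiplier {xs : ι → ℝ} (hxs : xs ∈ stdSimplex ℝ ι) (hxsr : r ⬝ᵥ xs ≤ b)
    (hopt : ∀ x ∈ stdSimplex ℝ ι, r ⬝ᵥ x ≤ b → c ⬝ᵥ x ≤ c ⬝ᵥ xs) :
    ∃ u, 0 ≤ u ∧ (∀ i, c i ≤ c ⬝ᵥ xs + u * (r i - b)) ∧ u * (r ⬝ᵥ xs - b) = 0 := by
  rcases hxsr.lt_or_eq with hslack | htight
  · refine ⟨0, le_rfl, fun i => ?_, zero_mul _⟩
    simpa using le_dotProduct_of_forall_dotProduct_le_of_lt hxs hopt hslack i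
  · obtain ⟨u, hu0, hu⟩ := exists_nonneg_le_add_mul_of_forall_dotProduct_le hopt
    exact ⟨u, hu0, hu, by rw [htight, sub_self, mul_zero]⟩

theorem sum_sum_mul_mul_eq_mulVec_dotProduct {m n : Type*} [Fintype m] [Fintype n]
    (A : Matrix m n ℝ) (x : m → ℝ) (y : n → ℝ) :
    ∑ i, ∑ k, x i * A i k * y k = A *ᵥ y ⬝ᵥ x := by
  simp only [dotProduct, mulVec, sum_mul, mul_assoc, mul_comm (x _)]

theorem kkt_necessity_player_one_general (m n : ℕ)
    (A : Matrix (Fin m) (Fin n) ℝ)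
    (r : Fin m → ℝ) (rave : ℝ)
    (Xhat : Set (Fin m → ℝ))
    (hX : Xhat = {x | (∀ i, 0 ≤ x i) ∧ (∑ i, x i = 1) ∧ (∑ i, r i * x i ≤ rave)})
    (xs : Fin m → ℝ) (ys : Fin n → ℝ) (hxs : xs ∈ Xhat)
    (hNE1 : ∀ x ∈ Xhat, ∑ i, ∑ k, x i * A i k * ys k ≤ ∑ i, ∑ k, xs i * A i k * ys k) :
    ∃ u α : ℝ, 0 ≤ u ∧
      (∀ i, ∑ k, A i k * ys k - u * r i - α ≤ 0) ∧
      ((∑ i, ∑ k, xs i * A i k * ys k) - u * rave - α = 0) ∧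
      (u * ((∑ i, r i * xs i) - rave) = 0) := by
  subst hX
  obtain ⟨hxs0, hxs1, hxsr⟩ := hxs
  simp only [sum_sum_mul_mul_eq_mulVec_dotProduct] at hNE1 ⊢
  obtain ⟨u, hu0, hu, hslack⟩ := exists_kkt_multiplier (c := A *ᵥ ys) ⟨hxs0, hxs1⟩ hxsr
    fun x hx hxr => hNE1 x ⟨hx.1, hx.2, hxr⟩
  refine ⟨u, A *ᵥ ys ⬝ᵥ xs - u * rave, hu0, fun i => ?_, by ring, hslack⟩
  have hi : ∑ k, A i k * ys k ≤ A *ᵥ ys ⬝ᵥ xs + u * (r i - rave) := hu i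
  linarith

/-- KKT necessity (Theorem 2, player one direction): if (x*, y*) is a Nash equilibrium of the
constrained bimatrix game, then there exist multipliers u ≥ 0, α ∈ ℝ satisfying
A y* - u r - α 1 ≤ 0, x*ᵀA y* - u r_ave - α = 0 and u (rᵀx* - r_ave) = 0. -/
theorem kkt_necessity_player_one (m n : ℕ) (hm : 0 < m) (hn : 0 < n)
    (A B : Matrix (Fin m) (Fin n) ℝ)
    (r : Fin m → ℝ) (rave : ℝ) (j : Fin n → ℝ) (jave : ℝ)
    (hrave : (Finset.univ.inf' (Finset.univ_nonempty_iff.mpr ⟨⟨0, hm⟩⟩) r) ≤ rave)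
    (Xhat : Set (Fin m → ℝ)) (Yhat : Set (Fin n → ℝ))
    (hX : Xhat = {x | (∀ i, 0 ≤ x i) ∧ (∑ i, x i = 1) ∧ (∑ i, r i * x i ≤ rave)})
    (hY : Yhat = {y | (∀ k, 0 ≤ y k) ∧ (∑ k, y k = 1) ∧ (∑ k, j k * y k ≤ jave)})
    (xs : Fin m → ℝ) (ys : Fin n → ℝ) (hxs : xs ∈ Xhat) (hys : ys ∈ Yhat)
    (hNE1 : ∀ x ∈ Xhat, ∑ i, ∑ k, x i * A i k * ys k ≤ ∑ i, ∑ k, xs i * A i k * ys k)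
    (hNE2 : ∀ y ∈ Yhat, ∑ i, ∑ k, xs i * B i k * y k ≤ ∑ i, ∑ k, xs i * B i k * ys k) :
    ∃ u α : ℝ, 0 ≤ u ∧
      (∀ i, ∑ k, A i k * ys k - u * r i - α ≤ 0) ∧
      ((∑ i, ∑ k, xs i * A i k * ys k) - u * rave - α = 0) ∧
      (u * ((∑ i, r i * xs i) - rave) = 0) :=
  kkt_necessity_player_one_general m n A r rave Xhat hX xs ys hxs hNE1
end

section
/- Suppose x* ∈ X̂, y* ∈ Ŷ and there exist u ≥ 0, α ∈ ℝ with A y* - u·r - α·1 ≤ 0 componentwise, x*ᵀA y* = u·r_ave + α, and u·(rᵀx* - r_ave) = 0. Then x* maximizes xᵀA y* over all x ∈ X̂. -/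
open Finset

/-- KKT sufficiency (Theorem 2, player one direction): if x* ∈ X̂, y* ∈ Ŷ and there exist
u ≥ 0, α with A y* - u r - α 1 ≤ 0, x*ᵀA y* = u r_ave + α and u (rᵀx* - r_ave) = 0, then
x* maximizes xᵀA y* over X̂. -/
theorem kkt_sufficiency_player_one (m n : ℕ)
    (A : Matrix (Fin m) (Fin n) ℝ) (r : Fin m → ℝ) (rave : ℝ)
    (Xhat : Set (Fin m → ℝ))
    (hX : Xhat = {x | (∀ i, 0 ≤ x i) ∧ (∑ i, x i = 1) ∧ (∑ i, r i * x i ≤ rave)})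
    (xs : Fin m → ℝ) (ys : Fin n → ℝ)
    (hxs : xs ∈ Xhat) (hys : (∀ k, 0 ≤ ys k) ∧ (∑ k, ys k = 1))
    (u α : ℝ) (hu : 0 ≤ u)
    (h1 : ∀ i, ∑ k, A i k * ys k - u * r i - α ≤ 0)
    (h2 : ∑ i, ∑ k, xs i * A i k * ys k = u * rave + α)
    (h3 : u * ((∑ i, r i * xs i) - rave) = 0) :
    ∀ x ∈ Xhat, ∑ i, ∑ k, x i * A i k * ys k ≤ ∑ i, ∑ k, xs i * A i k * ys k := by
  subst hX
  rintro x ⟨hx0, hx1, hxr⟩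
  have key : ∑ i, ∑ k, x i * A i k * ys k ≤ ∑ i, x i * (u * r i + α) := by
    apply Finset.sum_le_sum
    intro i _
    have : ∑ k, x i * A i k * ys k = x i * ∑ k, A i k * ys k := by
      rw [Finset.mul_sum]; congr 1; ext k; ring
    rw [this]
    exact mul_le_mul_of_nonneg_left (by linarith [h1 i]) (hx0 i)
  have e1 : ∑ i, x i * (u * r i + α) = u * (∑ i, r i * x i) + α := by
    rw [Finset.mul_sum]
    have : ∑ i, x i * (u * r i + α) = (∑ i, u * (r i * x i)) + (∑ i, x i) * α := by
      rw [Finset.sum_mul, ← Finset.sum_add_distrib]; congr 1; ext i; ring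
    rw [this, hx1]; ring
  have : u * (∑ i, r i * x i) ≤ u * rave := mul_le_mul_of_nonneg_left hxr hu
  rw [h2]; linarith
end

section
/- For any feasible point (x, y, u, v, α, β) of the quadratic program—i.e., x ∈ X̂, y ∈ Ŷ, u,v ≥ 0, α,β ∈ ℝ satisfying A y - u·r - α·1 ≤ 0 and xᵀB - v·jᵀ - β·1ᵀ ≤ 0 componentwise—the objective value satisfies xᵀ(A+B)y - u·r_ave - v·j_ave - α - β ≤ 0. -/
open Finset

/-- For any feasible point of the quadratic program of Theorem 3, the objective value
xᵀ(A+B)y - u r_ave - v j_ave - α - β is at most zero. -/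
theorem quadratic_program_objective_nonpos (m n : ℕ)
    (A B : Matrix (Fin m) (Fin n) ℝ)
    (r : Fin m → ℝ) (rave : ℝ) (j : Fin n → ℝ) (jave : ℝ)
    (x : Fin m → ℝ) (y : Fin n → ℝ)
    (hx1 : ∀ i, 0 ≤ x i) (hx2 : ∑ i, x i = 1) (hx3 : ∑ i, r i * x i ≤ rave)
    (hy1 : ∀ k, 0 ≤ y k) (hy2 : ∑ k, y k = 1) (hy3 : ∑ k, j k * y k ≤ jave)
    (u v α β : ℝ) (hu : 0 ≤ u) (hv : 0 ≤ v)
    (hc1 : ∀ i, ∑ k, A i k * y k - u * r i - α ≤ 0)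
    (hc2 : ∀ k, ∑ i, x i * B i k - v * j k - β ≤ 0) :
    (∑ i, ∑ k, x i * (A i k + B i k) * y k) - u * rave - v * jave - α - β ≤ 0 := by
  have h1 : ∑ i, x i * ∑ k, A i k * y k ≤ u * rave + α := by
    calc ∑ i, x i * ∑ k, A i k * y k
        ≤ ∑ i, x i * (u * r i + α) := by
          apply Finset.sum_le_sum
          intro i _
          exact mul_le_mul_of_nonneg_left (by linarith [hc1 i]) (hx1 i)
      _ = u * (∑ i, r i * x i) + α * ∑ i, x i := by
          rw [Finset.mul_sum, Finset.mul_sum, ← Finset.sum_add_distrib]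
          apply Finset.sum_congr rfl; intro i _; ring
      _ ≤ u * rave + α := by
          rw [hx2]
          have := mul_le_mul_of_nonneg_left hx3 hu
          linarith
  have h2 : ∑ k, (∑ i, x i * B i k) * y k ≤ v * jave + β := by
    calc ∑ k, (∑ i, x i * B i k) * y k
        ≤ ∑ k, (v * j k + β) * y k := by
          apply Finset.sum_le_sum
          intro k _
          exact mul_le_mul_of_nonneg_right (by linarith [hc2 k]) (hy1 k)
      _ = v * (∑ k, j k * y k) + β * ∑ k, y k := by
          rw [Finset.mul_sum, Finset.mul_sum, ← Finset.sum_add_distrib]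
          apply Finset.sum_congr rfl; intro k _; ring
      _ ≤ v * jave + β := by
          rw [hy2]
          have := mul_le_mul_of_nonneg_left hy3 hv
          linarith
  have key : (∑ i, ∑ k, x i * (A i k + B i k) * y k)
      = (∑ i, x i * ∑ k, A i k * y k) + ∑ k, (∑ i, x i * B i k) * y k := by
    have : (∑ k, (∑ i, x i * B i k) * y k) = ∑ i, ∑ k, x i * B i k * y k := by
      rw [Finset.sum_comm]
      exact Finset.sum_congr rfl fun k _ => by rw [Finset.sum_mul]
    rw [this, ← Finset.sum_add_distrib]
    apply Finset.sum_congr rfl; intro i _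
    rw [Finset.mul_sum, ← Finset.sum_add_distrib]
    apply Finset.sum_congr rfl; intro k _; ring
  linarith
end

section
/- If (x*, y*, u*, v*, α*, β*) is feasible for the quadratic program (x* ∈ X̂, y* ∈ Ŷ, u*, v* ≥ 0, A y* - u* r - α* 1 ≤ 0, x*ᵀB - v* jᵀ - β* 1ᵀ ≤ 0) and achieves objective value zero, i.e., x*ᵀ(A+B)y* - u* r_ave - v* j_ave - α* - β* = 0, then (x*, y*) is a Nash equilibrium of the constrained bimatrix game: x* maximizes xᵀA y* over X̂ and y* maximizes x*ᵀB y over Ŷ. -/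
open Finset

/-- Theorem 3 (sufficiency direction): a feasible point of the quadratic program with
objective value zero yields a Nash equilibrium of the constrained bimatrix game. -/
theorem quadratic_program_zero_implies_NE (m n : ℕ)
    (A B : Matrix (Fin m) (Fin n) ℝ)
    (r : Fin m → ℝ) (rave : ℝ) (j : Fin n → ℝ) (jave : ℝ)
    (Xhat : Set (Fin m → ℝ)) (Yhat : Set (Fin n → ℝ))
    (hX : Xhat = {x | (∀ i, 0 ≤ x i) ∧ (∑ i, x i = 1) ∧ (∑ i, r i * x i ≤ rave)})
    (hY : Yhat = {y | (∀ k, 0 ≤ y k) ∧ (∑ k, y k = 1) ∧ (∑ k, j k * y k ≤ jave)})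
    (xs : Fin m → ℝ) (ys : Fin n → ℝ) (hxs : xs ∈ Xhat) (hys : ys ∈ Yhat)
    (u v α β : ℝ) (hu : 0 ≤ u) (hv : 0 ≤ v)
    (hc1 : ∀ i, ∑ k, A i k * ys k - u * r i - α ≤ 0)
    (hc2 : ∀ k, ∑ i, xs i * B i k - v * j k - β ≤ 0)
    (hobj : (∑ i, ∑ k, xs i * (A i k + B i k) * ys k) - u * rave - v * jave - α - β = 0) :
    (∀ x ∈ Xhat, ∑ i, ∑ k, x i * A i k * ys k ≤ ∑ i, ∑ k, xs i * A i k * ys k) ∧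
    (∀ y ∈ Yhat, ∑ i, ∑ k, xs i * B i k * y k ≤ ∑ i, ∑ k, xs i * B i k * ys k) := by

  have key1 : ∀ x ∈ Xhat, ∑ i, ∑ k, x i * A i k * ys k ≤ u * rave + α := by
    intro x hx
    rw [hX] at hx
    obtain ⟨hpos, hsum, hr⟩ := hx
    have h1 : ∑ i, ∑ k, x i * A i k * ys k = ∑ i, x i * ∑ k, A i k * ys k := by
      apply Finset.sum_congr rfl
      intro i _
      rw [Finset.mul_sum]
      apply Finset.sum_congr rfl
      intro k _
      ring
    rw [h1]
    calc ∑ i, x i * ∑ k, A i k * ys k ≤ ∑ i, x i * (u * r i + α) := by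
          apply Finset.sum_le_sum
          intro i _
          exact mul_le_mul_of_nonneg_left (by linarith [hc1 i]) (hpos i)
      _ = u * ∑ i, r i * x i + α * ∑ i, x i := by
          rw [Finset.mul_sum, Finset.mul_sum, ← Finset.sum_add_distrib]
          apply Finset.sum_congr rfl
          intros; ring
      _ ≤ u * rave + α := by
          rw [hsum]
          have := mul_le_mul_of_nonneg_left hr hu
          linarith
  have key2 : ∀ y ∈ Yhat, ∑ i, ∑ k, xs i * B i k * y k ≤ v * jave + β := by
    intro y hy
    rw [hY] at hy
    obtain ⟨hpos, hsum, hj⟩ := hy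
    have h1 : ∑ i, ∑ k, xs i * B i k * y k = ∑ k, y k * ∑ i, xs i * B i k := by
      rw [Finset.sum_comm]
      apply Finset.sum_congr rfl
      intro k _
      rw [Finset.mul_sum]
      apply Finset.sum_congr rfl
      intro i _
      ring
    rw [h1]
    calc ∑ k, y k * ∑ i, xs i * B i k ≤ ∑ k, y k * (v * j k + β) := by
          apply Finset.sum_le_sum
          intro k _
          exact mul_le_mul_of_nonneg_left (by linarith [hc2 k]) (hpos k)
      _ = v * ∑ k, j k * y k + β * ∑ k, y k := by
          rw [Finset.mul_sum, Finset.mul_sum, ← Finset.sum_add_distrib]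
          apply Finset.sum_congr rfl
          intros; ring
      _ ≤ v * jave + β := by
          rw [hsum]
          have := mul_le_mul_of_nonneg_left hj hv
          linarith
  have hsplit : ∑ i, ∑ k, xs i * (A i k + B i k) * ys k
      = (∑ i, ∑ k, xs i * A i k * ys k) + (∑ i, ∑ k, xs i * B i k * ys k) := by
    rw [← Finset.sum_add_distrib]
    apply Finset.sum_congr rfl
    intro i _
    rw [← Finset.sum_add_distrib]
    apply Finset.sum_congr rfl
    intro k _
    ring
  rw [hsplit] at hobj
  have hA := key1 xs hxs
  have hB := key2 ys hys
  constructor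
  · intro x hx
    have := key1 x hx
    linarith
  · intro y hy
    have := key2 y hy
    linarith
end

section
/- If (x*, y*) is a Nash equilibrium of the constrained bimatrix game, then there exist u*, v* ≥ 0 and α*, β* ∈ ℝ such that (x*, y*, u*, v*, α*, β*) is feasible for the quadratic program and achieves the objective value x*ᵀ(A+B)y* - u* r_ave - v* j_ave - α* - β* = 0, which is the global maximum. -/
open Finset

lemma lp_dual {m : ℕ} (c r : Fin m → ℝ) (rave : ℝ) (xs : Fin m → ℝ)
    (hpos : ∀ i, 0 ≤ xs i) (hsum : ∑ i, xs i = 1) (hr : ∑ i, r i * xs i ≤ rave)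
    (hopt : ∀ x : Fin m → ℝ, (∀ i, 0 ≤ x i) → (∑ i, x i = 1) → (∑ i, r i * x i ≤ rave) →
      ∑ i, x i * c i ≤ ∑ i, xs i * c i) :
    ∃ u : ℝ, 0 ≤ u ∧ ∀ i, c i ≤ u * (r i - rave) + ∑ i, xs i * c i := by
  set V : ℝ := ∑ i, xs i * c i with hV
  set R : ℝ := ∑ i, r i * xs i with hR
  have claim1 : ∀ i, r i ≤ rave → c i ≤ V := by
    intro i hi
    have h := hopt (fun k => if k = i then 1 else 0)
      (fun k => by positivity) (by simp) (by simp [mul_ite, hi])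
    simpa using h
  rcases lt_or_eq_of_le hr with hRlt | hReq
  · -- slack case: u = 0 works
    refine ⟨0, le_refl 0, fun i => ?_⟩
    set d : ℝ := r i - R with hd
    set t : ℝ := min 1 ((rave - R) / (|d| + 1)) with ht
    have ht0 : 0 < t := lt_min one_pos (div_pos (by linarith) (by positivity))
    have ht1 : t ≤ 1 := min_le_left _ _
    have htbound : t * d ≤ rave - R := by
      have h1 : t ≤ (rave - R) / (|d| + 1) := min_le_right _ _
      have h2 : t * d ≤ t * |d| :=
        mul_le_mul_of_nonneg_left (le_abs_self d) (le_of_lt ht0)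
      have h3 : t * |d| ≤ ((rave - R) / (|d| + 1)) * |d| :=
        mul_le_mul_of_nonneg_right h1 (abs_nonneg d)
      have h4 : ((rave - R) / (|d| + 1)) * |d| ≤ rave - R := by
        rw [div_mul_eq_mul_div, div_le_iff₀ (by positivity)]
        nlinarith [abs_nonneg d]
      linarith
    set x : Fin m → ℝ := fun k => (1 - t) * xs k + t * (if k = i then 1 else 0) with hx
    have hx1 : ∀ k, 0 ≤ x k := by
      intro k
      have h1 : 0 ≤ (1 - t) * xs k := mul_nonneg (by linarith) (hpos k)
      have h2 : (0:ℝ) ≤ t * (if k = i then 1 else 0) := by positivity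
      simp only [hx]; linarith
    have hmix : ∀ w : Fin m → ℝ,
        ∑ k, w k * x k = (1 - t) * (∑ k, w k * xs k) + t * w i := by
      intro w
      have hterm : ∀ k, w k * x k
          = (1 - t) * (w k * xs k) + t * (w k * (if k = i then 1 else 0)) := by
        intro k; simp only [hx]; ring
      rw [Finset.sum_congr rfl (fun k _ => hterm k), Finset.sum_add_distrib,
        ← Finset.mul_sum, ← Finset.mul_sum]
      congr 1
      simp [mul_ite]
    have hx2 : ∑ k, x k = 1 := by
      have := hmix (fun _ => 1)
      simpa [hsum] using this
    have hx3 : ∑ k, r k * x k ≤ rave := by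
      rw [hmix r, ← hR]
      have : (1 - t) * R + t * r i = R + t * d := by rw [hd]; ring
      rw [this]; linarith
    have hle := hopt x hx1 hx2 hx3
    have hcsum : ∑ k, x k * c k = (1 - t) * V + t * c i := by
      have hcomm : ∀ k, x k * c k = c k * x k := fun k => mul_comm _ _
      rw [Finset.sum_congr rfl (fun k _ => hcomm k), hmix c, hV]
      congr 2
      exact Finset.sum_congr rfl fun k _ => mul_comm _ _
    rw [hcsum] at hle
    nlinarith
  · -- tight case
    have key : ∀ p q : Fin m, rave < r p → r q < rave →
        (c p - V) * (rave - r q) ≤ (V - c q) * (r p - rave) := by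
      intro p q hp hq
      have hpq : r q < r p := lt_trans hq hp
      have hden : 0 < r p - r q := by linarith
      set lam : ℝ := (rave - r q) / (r p - r q) with hlam
      have hlam0 : 0 ≤ lam := div_nonneg (by linarith) (le_of_lt hden)
      have hlam1 : lam ≤ 1 := by
        rw [hlam, div_le_one hden]; linarith
      have hlamval : lam * (r p - r q) = rave - r q := by
        rw [hlam, div_mul_cancel₀]; exact ne_of_gt hden
      set x : Fin m → ℝ := fun k =>
        lam * (if k = p then 1 else 0) + (1 - lam) * (if k = q then 1 else 0) with hx
      have hx1 : ∀ k, 0 ≤ x k := by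
        intro k
        have h1 : (0:ℝ) ≤ lam * (if k = p then 1 else 0) := by positivity
        have h2 : (0:ℝ) ≤ (1 - lam) * (if k = q then 1 else 0) := by
          apply mul_nonneg (by linarith); positivity
        simp only [hx]; linarith
      have hmix : ∀ w : Fin m → ℝ,
          ∑ k, w k * x k = lam * w p + (1 - lam) * w q := by
        intro w
        have hterm : ∀ k, w k * x k
            = lam * (w k * (if k = p then 1 else 0))
              + (1 - lam) * (w k * (if k = q then 1 else 0)) := by
          intro k; simp only [hx]; ring
        rw [Finset.sum_congr rfl (fun k _ => hterm k), Finset.sum_add_distrib,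
          ← Finset.mul_sum, ← Finset.mul_sum]
        congr 1 <;> simp [mul_ite]
      have hx2 : ∑ k, x k = 1 := by
        have := hmix (fun _ => 1)
        simpa using this
      have hx3 : ∑ k, r k * x k ≤ rave := by
        rw [hmix r]
        nlinarith
      have hle := hopt x hx1 hx2 hx3
      have hcsum : ∑ k, x k * c k = lam * c p + (1 - lam) * c q := by
        have hcomm : ∀ k, x k * c k = c k * x k := fun k => mul_comm _ _
        rw [Finset.sum_congr rfl (fun k _ => hcomm k), hmix c]
      rw [hcsum] at hle
      have h2 := mul_le_mul_of_nonneg_right hle (le_of_lt hden)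
      have e1 : lam * c p * (r p - r q) = c p * (rave - r q) := by
        rw [mul_comm lam (c p), mul_assoc, hlamval]
      have e2 : (1 - lam) * c q * (r p - r q) = c q * (r p - rave) := by
        have h3 : (1 - lam) * (r p - r q) = r p - rave := by
          nlinarith [hlamval]
        calc (1 - lam) * c q * (r p - r q) = c q * ((1 - lam) * (r p - r q)) := by ring
          _ = c q * (r p - rave) := by rw [h3]
      have e3 : V * (r p - r q) = V * (rave - r q) + V * (r p - rave) := by ring
      nlinarith [h2, e1, e2, e3]
    -- define u as max of 0 and the ratios over P = {p : rave < r p}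
    set f : Fin m → ℝ := fun p => (c p - V) / (r p - rave) with hf
    set S : Finset ℝ :=
      insert 0 ((Finset.univ.filter (fun p => rave < r p)).image f) with hS
    have hSne : S.Nonempty := ⟨0, Finset.mem_insert_self _ _⟩
    set u : ℝ := S.max' hSne with hu
    have hu0 : 0 ≤ u := Finset.le_max' S 0 (Finset.mem_insert_self _ _)
    have hup : ∀ p, rave < r p → f p ≤ u := by
      intro p hp
      apply Finset.le_max'
      exact Finset.mem_insert_of_mem
        (Finset.mem_image_of_mem f (by simp [hp]))
    have humem : u = 0 ∨ ∃ p, rave < r p ∧ u = f p := by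
      have := S.max'_mem hSne
      rw [← hu] at this
      rcases Finset.mem_insert.mp this with h | h
      · exact Or.inl h
      · rcases Finset.mem_image.mp h with ⟨p, hpmem, hpeq⟩
        exact Or.inr ⟨p, (Finset.mem_filter.mp hpmem).2, hpeq.symm⟩
    refine ⟨u, hu0, fun i => ?_⟩
    rcases lt_trichotomy (r i) rave with hi | hi | hi
    · -- r i < rave
      have hciV : c i ≤ V := claim1 i (le_of_lt hi)
      rcases humem with h0 | ⟨p, hp, hpe⟩
      · rw [h0]; nlinarith
      · have hkey := key p i hp hi
        have hpd : 0 < r p - rave := by linarith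
        have hval : u * (r p - rave) = c p - V := by
          rw [hpe, hf]; field_simp
        have hbnd : u * (rave - r i) ≤ V - c i := by
          have h2 : u * (rave - r i) * (r p - rave) ≤ (V - c i) * (r p - rave) := by
            nlinarith
          exact le_of_mul_le_mul_right h2 hpd
        nlinarith
    · -- r i = rave
      have hciV : c i ≤ V := claim1 i (le_of_eq hi)
      rw [hi]; nlinarith
    · -- rave < r i
      have := hup i hi
      rw [hf] at this
      have hpd : 0 < r i - rave := by linarith
      have := (div_le_iff₀ hpd).mp this
      linarith


/-- Theorem 3 (necessity direction): every Nash equilibrium of the constrained bimatrix game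
yields, together with suitable multipliers, a feasible point of the quadratic program
achieving objective value zero (the global maximum). -/
theorem NE_implies_quadratic_program_zero (m n : ℕ)
    (A B : Matrix (Fin m) (Fin n) ℝ)
    (r : Fin m → ℝ) (rave : ℝ) (j : Fin n → ℝ) (jave : ℝ)
    (Xhat : Set (Fin m → ℝ)) (Yhat : Set (Fin n → ℝ))
    (hX : Xhat = {x | (∀ i, 0 ≤ x i) ∧ (∑ i, x i = 1) ∧ (∑ i, r i * x i ≤ rave)})
    (hY : Yhat = {y | (∀ k, 0 ≤ y k) ∧ (∑ k, y k = 1) ∧ (∑ k, j k * y k ≤ jave)})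
    (xs : Fin m → ℝ) (ys : Fin n → ℝ) (hxs : xs ∈ Xhat) (hys : ys ∈ Yhat)
    (hNE1 : ∀ x ∈ Xhat, ∑ i, ∑ k, x i * A i k * ys k ≤ ∑ i, ∑ k, xs i * A i k * ys k)
    (hNE2 : ∀ y ∈ Yhat, ∑ i, ∑ k, xs i * B i k * y k ≤ ∑ i, ∑ k, xs i * B i k * ys k) :
    ∃ u v α β : ℝ, 0 ≤ u ∧ 0 ≤ v ∧
      (∀ i, ∑ k, A i k * ys k - u * r i - α ≤ 0) ∧
      (∀ k, ∑ i, xs i * B i k - v * j k - β ≤ 0) ∧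
      ((∑ i, ∑ k, xs i * (A i k + B i k) * ys k) - u * rave - v * jave - α - β = 0) ∧
      (∀ x : Fin m → ℝ, ∀ y' : Fin n → ℝ, ∀ u' v' α' β' : ℝ,
        x ∈ Xhat → y' ∈ Yhat → 0 ≤ u' → 0 ≤ v' →
        (∀ i, ∑ k, A i k * y' k - u' * r i - α' ≤ 0) →
        (∀ k, ∑ i, x i * B i k - v' * j k - β' ≤ 0) →
        (∑ i, ∑ k, x i * (A i k + B i k) * y' k) - u' * rave - v' * jave - α' - β' ≤
          (∑ i, ∑ k, xs i * (A i k + B i k) * ys k) - u * rave - v * jave - α - β) := by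
  rw [hX] at hxs; rw [hY] at hys
  obtain ⟨hxs1, hxs2, hxs3⟩ := hxs
  obtain ⟨hys1, hys2, hys3⟩ := hys
  -- rearrangement identities
  have hcA : ∀ (x : Fin m → ℝ) (y : Fin n → ℝ),
      ∑ i, ∑ k, x i * A i k * y k = ∑ i, x i * (∑ k, A i k * y k) := by
    intro x y
    refine Finset.sum_congr rfl fun i _ => ?_
    rw [Finset.mul_sum]
    exact Finset.sum_congr rfl fun k _ => by ring
  have hdB : ∀ (x : Fin m → ℝ) (y : Fin n → ℝ),
      ∑ i, ∑ k, x i * B i k * y k = ∑ k, y k * (∑ i, x i * B i k) := by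
    intro x y
    rw [Finset.sum_comm]
    refine Finset.sum_congr rfl fun k _ => ?_
    rw [Finset.mul_sum]
    exact Finset.sum_congr rfl fun i _ => by ring
  have hsplit : ∀ (x : Fin m → ℝ) (y : Fin n → ℝ),
      ∑ i, ∑ k, x i * (A i k + B i k) * y k
        = (∑ i, ∑ k, x i * A i k * y k) + (∑ i, ∑ k, x i * B i k * y k) := by
    intro x y
    rw [← Finset.sum_add_distrib]
    refine Finset.sum_congr rfl fun i _ => ?_
    rw [← Finset.sum_add_distrib]
    exact Finset.sum_congr rfl fun k _ => by ring
  set c : Fin m → ℝ := fun i => ∑ k, A i k * ys k with hc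
  set d : Fin n → ℝ := fun k => ∑ i, xs i * B i k with hd
  -- apply duality to player 1
  obtain ⟨u, hu0, hu⟩ := lp_dual c r rave xs hxs1 hxs2 hxs3 (by
    intro x hx1 hx2 hx3
    have h := hNE1 x (by rw [hX]; exact ⟨hx1, hx2, hx3⟩)
    rw [hcA x ys, hcA xs ys] at h
    exact h)
  -- apply duality to player 2
  obtain ⟨v, hv0, hv⟩ := lp_dual d j jave ys hys1 hys2 hys3 (by
    intro y hy1 hy2 hy3
    have h := hNE2 y (by rw [hY]; exact ⟨hy1, hy2, hy3⟩)
    rw [hdB xs y, hdB xs ys] at h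
    exact h)
  set V1 : ℝ := ∑ i, xs i * c i with hV1
  set V2 : ℝ := ∑ k, ys k * d k with hV2
  have hzero : (∑ i, ∑ k, xs i * (A i k + B i k) * ys k)
      - u * rave - v * jave - (V1 - u * rave) - (V2 - v * jave) = 0 := by
    rw [hsplit xs ys, hcA xs ys, hdB xs ys, ← hV1, ← hV2]; ring
  refine ⟨u, v, V1 - u * rave, V2 - v * jave, hu0, hv0, ?_, ?_, hzero, ?_⟩
  · intro i
    have h := hu i
    have e : u * (r i - rave) = u * r i - u * rave := by ring
    linarith
  · intro k
    have h := hv k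
    have e : v * (j k - jave) = v * j k - v * jave := by ring
    linarith
  · intro x y' u' v' α' β' hx hy hu' hv' hA hB
    rw [hzero]
    rw [hX] at hx; rw [hY] at hy
    obtain ⟨hx1, hx2, hx3⟩ := hx
    obtain ⟨hy1, hy2, hy3⟩ := hy
    have b1 : ∑ i, ∑ k, x i * A i k * y' k ≤ u' * rave + α' := by
      rw [hcA x y']
      have step1 : ∑ i, x i * (∑ k, A i k * y' k) ≤ ∑ i, x i * (u' * r i + α') := by
        apply Finset.sum_le_sum
        intro i _
        exact mul_le_mul_of_nonneg_left (by linarith [hA i]) (hx1 i)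
      have step2 : ∑ i, x i * (u' * r i + α')
          = u' * (∑ i, r i * x i) + α' * (∑ i, x i) := by
        rw [Finset.mul_sum, Finset.mul_sum, ← Finset.sum_add_distrib]
        exact Finset.sum_congr rfl fun i _ => by ring
      have step3 : u' * (∑ i, r i * x i) ≤ u' * rave :=
        mul_le_mul_of_nonneg_left hx3 hu'
      rw [hx2] at step2
      linarith
    have b2 : ∑ i, ∑ k, x i * B i k * y' k ≤ v' * jave + β' := by
      rw [hdB x y']
      have step1 : ∑ k, y' k * (∑ i, x i * B i k) ≤ ∑ k, y' k * (v' * j k + β') := by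
        apply Finset.sum_le_sum
        intro k _
        exact mul_le_mul_of_nonneg_left (by linarith [hB k]) (hy1 k)
      have step2 : ∑ k, y' k * (v' * j k + β')
          = v' * (∑ k, j k * y' k) + β' * (∑ k, y' k) := by
        rw [Finset.mul_sum, Finset.mul_sum, ← Finset.sum_add_distrib]
        exact Finset.sum_congr rfl fun k _ => by ring
      have step3 : v' * (∑ k, j k * y' k) ≤ v' * jave :=
        mul_le_mul_of_nonneg_left hy3 hv'
      rw [hy2] at step2
      linarith
    rw [hsplit x y']
    linarith
end

section
/- In the constrained zero-sum jamming game where the jammer's payoff matrix has row i (power level J_i) dominated by row n (maximum power J_n), the jammer's optimal strategy under the constraint ∑ y_j J_j ≤ J_ave (with 0 ≤ J_ave ≤ J_n) is to play J_n with probability p = J_ave/J_n and J_0 = 0 with probability 1 - p, yielding expected payoff J_ave/J_n. -/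
/-!
Against a fixed jammer strategy `y`, every row of the payoff matrix collects at least `y_n`
(the last column is all ones), and the last row collects exactly that, so the transmitter
holds the jammer to `y_n`. The power constraint gives `J_n y_n ≤ J_ave`, since all powers
are nonnegative; the strategy putting mass `J_ave / J_n` on `J_n` and the rest on `J_0 = 0`
meets it with equality.
-/

open Finset

section JammingGame

variable {n : ℕ}

def jammerPayoff (x : Fin n → ℝ) (y : Fin (n + 1) → ℝ) : ℝ :=
  ∑ i : Fin n, ∑ j : Fin (n + 1), x i * (if (i : ℕ) < (j : ℕ) then (1 : ℝ) else 0) * y j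

def transmitterPayoffs (y : Fin (n + 1) → ℝ) : Set ℝ :=
  {s | ∃ x : Fin n → ℝ, (∀ i, 0 ≤ x i) ∧ (∑ i, x i = 1) ∧ s = jammerPayoff x y}

theorem last_le_jammerPayoff {x : Fin n → ℝ} {y : Fin (n + 1) → ℝ} (hx : ∀ i, 0 ≤ x i)
    (hx1 : ∑ i, x i = 1) (hy : ∀ j, 0 ≤ y j) : y (Fin.last n) ≤ jammerPayoff x y := by
  calc y (Fin.last n) = ∑ i, x i * y (Fin.last n) := by rw [← sum_mul, hx1, one_mul]
    _ ≤ jammerPayoff x y := by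
      refine sum_le_sum fun i _ => ?_
      refine le_of_eq_of_le ?_ (single_le_sum (f := fun j : Fin (n + 1) =>
        x i * (if (i : ℕ) < (j : ℕ) then (1 : ℝ) else 0) * y j) (fun j _ => ?_)
        (mem_univ (Fin.last n)))
      · simp [i.isLt]
      · split_ifs <;> simp [mul_nonneg (hx i) (hy j)]

theorem lt_val_iff_eq_last {m : ℕ} (j : Fin (m + 2)) : m < (j : ℕ) ↔ j = Fin.last (m + 1) := by
  rw [Fin.ext_iff, Fin.val_last]
  omega

theorem jammerPayoff_single_last {m : ℕ} (y : Fin (m + 2) → ℝ) :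
    jammerPayoff (Pi.single (Fin.last m) 1) y = y (Fin.last (m + 1)) := by
  rw [jammerPayoff, sum_eq_single (Fin.last m) (fun i _ hi => by simp [hi]) (by simp)]
  simp [lt_val_iff_eq_last]

theorem isLeast_transmitterPayoffs (hn : 0 < n) {y : Fin (n + 1) → ℝ} (hy : ∀ j, 0 ≤ y j) :
    IsLeast (transmitterPayoffs y) (y (Fin.last n)) := by
  refine ⟨?_, fun s ⟨x, hx, hx1, hs⟩ => hs ▸ last_le_jammerPayoff hx hx1 hy⟩
  obtain ⟨m, rfl⟩ : ∃ m, n = m + 1 := ⟨n - 1, by omega⟩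
  have hx : (0 : Fin (m + 1) → ℝ) ≤ Pi.single (Fin.last m) 1 := Pi.single_nonneg.2 zero_le_one
  exact ⟨Pi.single (Fin.last m) 1, hx, by simp, (jammerPayoff_single_last y).symm⟩

end JammingGame

/-- The maxmin value of the constrained zero-sum jamming game equals J_ave / J_n:
the jammer's payoff is 1 iff the jamming power index exceeds the transmitter's row index,
the jammer is constrained to average power at most J_ave, and the greatest guaranteed
(worst-case over transmitter mixed strategies) expected payoff is J_ave / J_n. -/
theorem constrained_zero_sum_maxmin_value (n : ℕ) (hn : 0 < n)
    (J : Fin (n + 1) → ℝ) (hJ0 : J 0 = 0) (hJmono : StrictMono J)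
    (Jave : ℝ) (hJave0 : 0 ≤ Jave) (hJaven : Jave ≤ J (Fin.last n)) :
    IsGreatest
      {t : ℝ | ∃ y : Fin (n + 1) → ℝ,
        (∀ j, 0 ≤ y j) ∧ (∑ j, y j = 1) ∧ (∑ j, J j * y j ≤ Jave) ∧
        IsGLB {s : ℝ | ∃ x : Fin n → ℝ, (∀ i, 0 ≤ x i) ∧ (∑ i, x i = 1) ∧
          s = ∑ i : Fin n, ∑ j : Fin (n+1), x i * (if (i : ℕ) < (j : ℕ) then (1 : ℝ) else 0) * y j} t}
      (Jave / J (Fin.last n)) := by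
  have hlast : (0 : Fin (n + 1)) ≠ Fin.last n := Fin.ext_iff.not.2 (by simp; omega)
  have hJn : 0 < J (Fin.last n) := hJ0 ▸ hJmono (Fin.pos_iff_ne_zero.2 hlast.symm)
  have hJ : ∀ j, 0 ≤ J j := fun j => hJ0 ▸ hJmono.monotone (Fin.zero_le j)
  set p := Jave / J (Fin.last n)
  have hp1 : p ≤ 1 := (div_le_one hJn).2 hJaven
  constructor
  · set y : Fin (n + 1) → ℝ := Pi.single 0 (1 - p) + Pi.single (Fin.last n) p
    have hy : 0 ≤ y := add_nonneg (Pi.single_nonneg.2 (sub_nonneg.2 hp1))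
      (Pi.single_nonneg.2 (div_nonneg hJave0 hJn.le))
    refine ⟨y, hy, by simp [y, sum_add_distrib], ?_, ?_⟩
    · simp [y, mul_add, sum_add_distrib, Pi.single_apply, hJ0, p, mul_div_cancel₀ _ hJn.ne']
    · have hyp : y (Fin.last n) = p := by simp [y, hlast.symm]
      exact hyp ▸ (isLeast_transmitterPayoffs hn hy).isGLB
  · rintro t ⟨y, hy, -, hyJ, hglb⟩
    rw [hglb.unique (isLeast_transmitterPayoffs hn hy).isGLB, le_div_iff₀ hJn, mul_comm]
    exact (single_le_sum (f := fun j => J j * y j) (fun j _ => mul_nonneg (hJ j) (hy j))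
      (mem_univ _)).trans hyJ
end
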